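/- arXiv:1012.5744 — 2 statements merged into one kernel-verified Lean document; each statement's English description precedes it below -/
import Mathlib

section
/- For all integers i ≥ 0, k ≥ 0 and n ≥ 0, H_{k+1}(Δ^{i+1} S_n)·H_k(Δ^{i+m} S_{n+1}) = H_k(Δ^{i+m+1} S_n)·H_{k+1}(Δ^i S_{n+1}) − H_k(Δ^{i+m+1} S_{n+1})·H_{k+1}(Δ^i S_n). -/
/-- Forward difference operator: `(fd u) n = u (n+1) - u n`.
Iterated differences are `fd^[i] u`. -/
def fd (u : ℕ → ℝ) : ℕ → ℝ := fun n => u (n + 1) - u n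

/-- Hankel-type determinant `H_k(u_n)` (depending on the fixed integer `m`):
the determinant of the `k × k` matrix whose `(i,j)` entry is `Δ^{i·m} u_{n+j}`.
By convention `H_k = 0` for `k < 0`, and `H_0 = 1` (empty determinant). -/
noncomputable def Hd (m : ℕ) (u : ℕ → ℝ) (k : ℤ) (n : ℕ) : ℝ :=
  if k < 0 then 0
  else Matrix.det (Matrix.of fun i j : Fin k.toNat => fd^[i.val * m] u (n + j.val))

/-!
Put `A a b = Δ^{am+i} S_{n+b}`. Each of the six determinants is then a contiguous minor either
of the array `A` or of its column differences `A a (b+1) - A a b`, and the claim becomes a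
condensation identity between such minors, valid for an arbitrary array `A`.

To prove it, let `B` consist of rows `1, …, k` of `A` (columns `0, …, k+1`) and let
`F x y = det [x; y; B]` (`pairDet B x y`). Bordering by a row of ones turns column differences
into a plain determinant, and bordering by a unit vector `e_p` deletes column `p`, so each of the
six minors is `± F x y` with `x, y ∈ {1, e₀, e_{k+1}, A 0}`. The identity is then the three-term
Plücker relation `F x y F z w - F x z F y w + F x w F y z = 0`, obtained by applying `F x` to
the Cramer relation `∑ⱼ (-1)ʲ det (u without row j) • uⱼ = 0` among the `k + 3`
vectors `y, z, w, B` of `R^{k+2}`.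
-/

open Matrix

variable {R : Type*} [CommRing R]

theorem sum_det_removeNth_smul_eq_zero {N : ℕ} (u : Fin (N + 2) → Fin (N + 1) → R) :
    ∑ j : Fin (N + 2), ((-1) ^ (j : ℕ) * det (of (Fin.removeNth j u))) • u j = 0 := by
  funext c
  -- Expand, along its first column, a determinant whose first column repeats column `c`.
  have hcol : det (of fun j => vecCons (u j c) (u j)) = 0 :=
    det_zero_of_column_eq (i := 0) (j := c.succ) (Fin.succ_ne_zero c).symm fun _ => rfl
  rw [det_succ_column_zero] at hcol
  rw [Finset.sum_apply, Pi.zero_apply, ← hcol]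
  refine Finset.sum_congr rfl fun j _ => ?_
  have hminor : (of fun j => vecCons (u j c) (u j)).submatrix j.succAbove Fin.succ =
      of (Fin.removeNth j u) := rfl
  simp only [Pi.smul_apply, smul_eq_mul, of_apply, cons_val_zero, hminor]
  ring

theorem det_vecCons_single {N : ℕ} (p : Fin (N + 1)) (B : Fin N → Fin (N + 1) → R) :
    det (of (vecCons (Pi.single p 1) B)) =
      (-1) ^ (p : ℕ) * det (of fun a j => B a (p.succAbove j)) := by
  rw [det_succ_row_zero, Fintype.sum_eq_single p fun j hj => by simp [Pi.single_eq_of_ne hj]]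
  simp only [of_apply, cons_val_zero, Pi.single_eq_same, mul_one]
  rfl

theorem det_vecCons_one_eq_det_sub {N : ℕ} (A : Fin N → Fin (N + 1) → R) :
    det (of (vecCons 1 A)) = det (of fun a b : Fin N => A a b.succ - A a b.castSucc) := by
  let D : Fin N → Fin (N + 1) → R :=
    fun a => Fin.cases (A a 0) fun b => A a b.succ - A a b.castSucc
  have hcol : det (of (vecCons 1 A)) = det (of (vecCons (Pi.single 0 1) D)) := by
    refine det_eq_of_forall_col_eq_smul_add_pred (fun _ => 1) (fun i => ?_) (fun i j => ?_)
    · refine Fin.cases ?_ (fun a => ?_) i <;> simp [D]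
    · refine Fin.cases ?_ (fun a => ?_) i <;> simp [D]
  rw [hcol, det_vecCons_single]
  simp [D]

theorem of_vecCons_comp {α : Type*} {m : ℕ} {n n' : Type*} (v : n → α) (B : Fin m → n → α)
    (σ : n' → n) :
    (of fun a j => vecCons v B a (σ j)) = of (vecCons (v ∘ σ) fun a j => B a (σ j)) := by
  ext a j
  exact Fin.cases rfl (fun _ => rfl) a

section PairDet

variable {k : ℕ}

def pairDet (B : Fin k → Fin (k + 2) → R) (x y : Fin (k + 2) → R) : R :=
  det (of (vecCons x (vecCons y B)))

theorem pairDet_swap (B : Fin k → Fin (k + 2) → R) (x y : Fin (k + 2) → R) :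
    pairDet B y x = -pairDet B x y := by
  have hswap : (of (vecCons x (vecCons y B))).submatrix (Equiv.swap 0 1) id =
      of (vecCons y (vecCons x B)) := by
    ext i j
    refine Fin.cases ?_ (fun i => Fin.cases ?_ (fun i => ?_) i) i <;>
      simp [Equiv.swap_apply_def, Fin.ext_iff]
  rw [pairDet, pairDet, ← hswap, det_permute, Equiv.Perm.sign_swap (by simp)]
  simp

theorem pairDet_add_left (B : Fin k → Fin (k + 2) → R) (x x' y : Fin (k + 2) → R) :
    pairDet B (x + x') y = pairDet B x y + pairDet B x' y :=
  detRowAlternating.map_vecCons_add _ _ _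

theorem pairDet_smul_left (B : Fin k → Fin (k + 2) → R) (c : R) (x y : Fin (k + 2) → R) :
    pairDet B (c • x) y = c * pairDet B x y :=
  detRowAlternating.map_vecCons_smul _ _ _

def pairDetₗ (B : Fin k → Fin (k + 2) → R) :
    (Fin (k + 2) → R) →ₗ[R] (Fin (k + 2) → R) →ₗ[R] R :=
  LinearMap.mk₂ R (pairDet B) (pairDet_add_left B) (pairDet_smul_left B)
    (fun x y y' => by simp only [pairDet_swap B _ x, pairDet_add_left]; ring)
    (fun c x y => by simp only [pairDet_swap B _ x, pairDet_smul_left]; ring)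

theorem pairDet_row (B : Fin k → Fin (k + 2) → R) (x : Fin (k + 2) → R) (j : Fin k) :
    pairDet B x (B j) = 0 :=
  det_zero_of_row_eq (i := 1) (j := j.succ.succ) (by simp [Fin.ext_iff]) rfl

theorem pairDet_plucker (B : Fin k → Fin (k + 2) → R) (x y z w : Fin (k + 2) → R) :
    pairDet B x y * pairDet B z w - pairDet B x z * pairDet B y w +
      pairDet B x w * pairDet B y z = 0 := by
  set u := vecCons y (vecCons z (vecCons w B)) with hu
  have minor₀ : det (of (Fin.removeNth 0 u)) = pairDet B z w := by
    simp [hu, pairDet]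
  have minor₁ : det (of (Fin.removeNth (Fin.succ 0) u)) = pairDet B y w := by
    congr 1
    ext a b
    refine Fin.cases ?_ (fun a => ?_) a <;> simp [hu, Fin.removeNth]
  have minor₂ : det (of (Fin.removeNth (Fin.succ (Fin.succ 0)) u)) = pairDet B y z := by
    congr 1
    ext a b
    refine Fin.cases ?_ (fun a => Fin.cases ?_ (fun a => ?_) a) a <;>
      simp only [hu, Fin.removeNth, of_apply, Fin.succ_succAbove_zero, Fin.succ_succAbove_succ,
        Fin.succAbove_zero, cons_val_zero, cons_val_succ]
  have h := congrArg (pairDetₗ B x) (sum_det_removeNth_smul_eq_zero u)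
  rw [map_zero, map_sum, Fin.sum_univ_succ, Fin.sum_univ_succ, Fin.sum_univ_succ,
    minor₀, minor₁, minor₂] at h
  simp only [hu, map_smul, pairDetₗ, LinearMap.mk₂_apply, cons_val_zero, cons_val_succ,
    pairDet_row, smul_eq_mul, mul_zero, Finset.sum_const_zero, Fin.val_zero, Fin.val_succ] at h
  linear_combination h

end PairDet

theorem det_diff_mul_det_shift (A : ℕ → ℕ → R) (k : ℕ) :
    det (of fun a b : Fin (k + 1) => A a (b + 1) - A a b) *
        det (of fun a b : Fin k => A (a + 1) (b + 1)) =
      det (of fun a b : Fin k => A (a + 1) (b + 1) - A (a + 1) b) *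
          det (of fun a b : Fin (k + 1) => A a (b + 1)) -
        det (of fun a b : Fin k => A (a + 1) (b + 2) - A (a + 1) (b + 1)) *
          det (of fun a b : Fin (k + 1) => A a b) := by
  set B : Fin k → Fin (k + 2) → R := fun a b => A (a + 1) b
  set r₀ : Fin (k + 2) → R := fun b => A 0 b
  set e₀ : Fin (k + 2) → R := Pi.single 0 1
  set eₗ : Fin (k + 2) → R := Pi.single (Fin.last (k + 1)) 1
  have rows : vecCons r₀ B = fun (a : Fin (k + 1)) (b : Fin (k + 2)) => A a b := by
    funext a
    exact Fin.cases rfl (fun _ => rfl) a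
  have F_one_r₀ : det (of fun a b : Fin (k + 1) => A a (b + 1) - A a b) = pairDet B 1 r₀ := by
    rw [pairDet, det_vecCons_one_eq_det_sub, rows]
    rfl
  have F_e₀_eₗ : det (of fun a b : Fin k => A (a + 1) (b + 1)) = (-1) ^ k * pairDet B e₀ eₗ := by
    have heₗ : eₗ ∘ Fin.succAbove 0 = Pi.single (Fin.last k) 1 := by
      funext j
      simp [eₗ, Pi.single_apply, Fin.ext_iff]
    rw [pairDet, det_vecCons_single, of_vecCons_comp, heₗ, det_vecCons_single]
    simp [← mul_assoc, ← pow_add, B]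
  have F_eₗ_one : det (of fun a b : Fin k => A (a + 1) (b + 1) - A (a + 1) b) =
      (-1) ^ (k + 1) * pairDet B eₗ 1 := by
    rw [pairDet, det_vecCons_single, of_vecCons_comp, Pi.one_comp, det_vecCons_one_eq_det_sub]
    simp [← mul_assoc, ← pow_add, B]
  have F_e₀_r₀ : det (of fun a b : Fin (k + 1) => A a (b + 1)) = pairDet B e₀ r₀ := by
    rw [pairDet, det_vecCons_single, rows]
    simp
  have F_e₀_one : det (of fun a b : Fin k => A (a + 1) (b + 2) - A (a + 1) (b + 1)) =
      pairDet B e₀ 1 := by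
    rw [pairDet, det_vecCons_single, of_vecCons_comp, Pi.one_comp, det_vecCons_one_eq_det_sub]
    simp [B]
  have F_eₗ_r₀ : det (of fun a b : Fin (k + 1) => A a b) = (-1) ^ (k + 1) * pairDet B eₗ r₀ := by
    rw [pairDet, det_vecCons_single, rows]
    simp [← mul_assoc, ← pow_add]
  rw [F_one_r₀, F_e₀_eₗ, F_eₗ_one, F_e₀_r₀, F_e₀_one, F_eₗ_r₀]
  linear_combination (-1) ^ k * pairDet_plucker B e₀ eₗ 1 r₀

theorem Hd_natCast (m : ℕ) (u : ℕ → ℝ) (K n : ℕ) :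
    Hd m u K n = det (of fun a b : Fin K => fd^[a * m] u (n + b)) := by
  rw [Hd, if_neg (by omega)]
  rfl

theorem iterate_fd_succ_apply (u : ℕ → ℝ) (t x : ℕ) :
    fd^[t + 1] u x = fd^[t] u (x + 1) - fd^[t] u x := by
  rw [Function.iterate_succ_apply']
  rfl

theorem stmt_1_general (m : ℕ) (S : ℕ → ℝ) (i k n : ℕ) :
    Hd m (fd^[i + 1] S) ((k : ℤ) + 1) n * Hd m (fd^[i + m] S) (k : ℤ) (n + 1) =
      Hd m (fd^[i + m + 1] S) (k : ℤ) n * Hd m (fd^[i] S) ((k : ℤ) + 1) (n + 1) -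
        Hd m (fd^[i + m + 1] S) (k : ℤ) (n + 1) * Hd m (fd^[i] S) ((k : ℤ) + 1) n := by
  rw [← Nat.cast_succ]
  simp only [Hd_natCast]
  convert det_diff_mul_det_shift (fun a b => fd^[a * m + i] S (n + b)) k using 4 <;>
    ext a b <;>
    simp only [of_apply, ← Function.iterate_add_apply, ← add_assoc, iterate_fd_succ_apply] <;>
    ring_nf

/-- For all `i, k, n ≥ 0`: `H_{k+1}(Δ^{i+1}S_n) H_k(Δ^{i+m}S_{n+1})
= H_k(Δ^{i+m+1}S_n) H_{k+1}(Δ^i S_{n+1}) − H_k(Δ^{i+m+1}S_{n+1}) H_{k+1}(Δ^i S_n)`. -/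
theorem stmt_1 (m : ℕ) (hm : 1 ≤ m) (S : ℕ → ℝ) (i k n : ℕ) :
    Hd m (fd^[i + 1] S) ((k : ℤ) + 1) n * Hd m (fd^[i + m] S) (k : ℤ) (n + 1) =
      Hd m (fd^[i + m + 1] S) (k : ℤ) n * Hd m (fd^[i] S) ((k : ℤ) + 1) (n + 1) -
        Hd m (fd^[i + m + 1] S) (k : ℤ) (n + 1) * Hd m (fd^[i] S) ((k : ℤ) + 1) n :=
  stmt_1_general m S i k n
end

section
/- For all integers i ≥ 0, k ≥ 1 and n ≥ 0, H_{k+1}(Δ^i S_n)·H_{k−1}(Δ^{i+m} S_{n+1}) = H_k(Δ^i S_n)·H_k(Δ^{i+m} S_{n+1}) − H_k(Δ^i S_{n+1})·H_k(Δ^{i+m} S_n). -/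
open Matrix

noncomputable def finEndsSumEquiv (n : ℕ) : Fin 2 ⊕ Fin n ≃ Fin (n + 2) :=
  Equiv.ofBijective (Sum.elim ![0, Fin.last (n + 1)] fun i => i.castSucc.succ) <| by
    refine (Fintype.bijective_iff_injective_and_card _).2 ⟨?_, by simp [add_comm]⟩
    refine Function.Injective.sumElim ?_
      ((Fin.succ_injective _).comp (Fin.castSucc_injective _)) ?_
    · intro a b
      fin_cases a <;> fin_cases b <;> simp [Fin.ext_iff]
    · intro a i
      fin_cases a <;> simp [Fin.ext_iff]; omega

namespace Matrix

variable {R : Type*} [CommRing R]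

section Blocks

variable {m n : Type*} [Fintype m] [Fintype n] [DecidableEq m] [DecidableEq n]

theorem det_mul_det_toBlocks₁₁_adjugate (M : Matrix (m ⊕ n) (m ⊕ n) R) :
    M.det * M.adjugate.toBlocks₁₁.det = M.det ^ Fintype.card m * M.toBlocks₂₂.det := by
  have hM := M.mul_adjugate
  rw [← fromBlocks_toBlocks M.adjugate] at hM
  nth_rw 1 [← fromBlocks_toBlocks M] at hM
  rw [fromBlocks_multiply, ← fromBlocks_one, fromBlocks_smul, smul_zero, fromBlocks_inj] at hM
  obtain ⟨h₁₁, -, h₂₁, -⟩ := hM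
  have hMP : M * fromBlocks M.adjugate.toBlocks₁₁ 0 M.adjugate.toBlocks₂₁ 1 =
      fromBlocks (M.det • 1) M.toBlocks₁₂ 0 M.toBlocks₂₂ := by
    nth_rw 1 [← fromBlocks_toBlocks M]
    rw [fromBlocks_multiply, h₁₁, h₂₁]
    simp
  have h := congrArg det hMP
  rwa [det_mul, det_fromBlocks_zero₁₂, det_fromBlocks_zero₂₁, det_one, mul_one, det_smul, det_one,
    mul_one] at h

theorem det_toBlocks₁₁_adjugate [Nonempty m] (M : Matrix (m ⊕ n) (m ⊕ n) R) :
    M.adjugate.toBlocks₁₁.det = M.det ^ (Fintype.card m - 1) * M.toBlocks₂₂.det := by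
  let X := mvPolynomialX (m ⊕ n) (m ⊕ n) ℤ
  suffices X.adjugate.toBlocks₁₁.det = X.det ^ (Fintype.card m - 1) * X.toBlocks₂₂.det by
    rw [← mvPolynomialX_mapMatrix_aeval ℤ M, ← AlgHom.map_adjugate]
    set f := MvPolynomial.aeval (R := ℤ) fun p : (m ⊕ n) × (m ⊕ n) => M p.1 p.2
    change (f.mapMatrix X.adjugate.toBlocks₁₁).det =
      (f.mapMatrix X).det ^ _ * (f.mapMatrix X.toBlocks₂₂).det
    rw [← AlgHom.map_det, ← AlgHom.map_det, ← AlgHom.map_det, ← map_pow, ← map_mul, this]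
  apply mul_left_cancel₀ (det_mvPolynomialX_ne_zero (m ⊕ n) ℤ)
  rw [det_mul_det_toBlocks₁₁_adjugate, ← mul_assoc, ← pow_succ',
    Nat.sub_add_cancel Fintype.card_pos]

end Blocks

theorem desnanot_jacobi {n : ℕ} (A : Matrix (Fin (n + 2)) (Fin (n + 2)) R) :
    A.det * (A.submatrix (fun i : Fin n => i.castSucc.succ) fun i => i.castSucc.succ).det =
      (A.submatrix Fin.castSucc Fin.castSucc).det * (A.submatrix Fin.succ Fin.succ).det -
        (A.submatrix Fin.castSucc Fin.succ).det * (A.submatrix Fin.succ Fin.castSucc).det := by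
  have h := det_toBlocks₁₁_adjugate (A.submatrix (finEndsSumEquiv n) (finEndsSumEquiv n))
  rw [adjugate_submatrix_equiv_self, det_submatrix_equiv_self, det_fin_two] at h
  simp only [Fintype.card_fin, Nat.add_one_sub_one, pow_one] at h
  change adjugate A 0 0 * adjugate A (Fin.last _) (Fin.last _) -
      adjugate A 0 (Fin.last _) * adjugate A (Fin.last _) 0 =
    A.det * (A.submatrix (fun i : Fin n => i.castSucc.succ) fun i => i.castSucc.succ).det at h
  simp only [adjugate_fin_succ_eq_det_submatrix, Fin.succAbove_zero, Fin.succAbove_last,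
    Fin.val_zero, Fin.val_last] at h
  have hsign : ((-1 : R) ^ (n + 1)) ^ 2 = 1 := by rw [← pow_mul, pow_mul', neg_one_sq, one_pow]
  rw [← h]
  linear_combination ((A.submatrix Fin.castSucc Fin.castSucc).det *
      (A.submatrix Fin.succ Fin.succ).det -
    (A.submatrix Fin.castSucc Fin.succ).det * (A.submatrix Fin.succ Fin.castSucc).det) * hsign

end Matrix

def hankelMatrix (m : ℕ) (u : ℕ → ℝ) (k n : ℕ) : Matrix (Fin k) (Fin k) ℝ :=
  of fun a b => fd^[a * m] u (n + b)

theorem Hd_natCast_s3 (m : ℕ) (u : ℕ → ℝ) (k n : ℕ) :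
    Hd m u k n = (hankelMatrix m u k n).det := by
  simp [Hd, hankelMatrix]

theorem hankelMatrix_submatrix {m p q : ℕ} (u : ℕ → ℝ) (n : ℕ) (r c : Fin p → Fin q) (s t : ℕ)
    (hr : ∀ a, (r a : ℕ) = a + s) (hc : ∀ b, (c b : ℕ) = b + t) :
    (hankelMatrix m u q n).submatrix r c = hankelMatrix m (fd^[s * m] u) p (n + t) := by
  ext a b
  simp only [hankelMatrix, submatrix_apply, of_apply, hr, hc, ← Function.iterate_add_apply]
  rw [add_mul, add_right_comm n t, add_assoc]

theorem stmt_3_general (m : ℕ) (S : ℕ → ℝ) (i k n : ℕ) (hk : 1 ≤ k) :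
    Hd m (fd^[i] S) ((k : ℤ) + 1) n * Hd m (fd^[i + m] S) ((k : ℤ) - 1) (n + 1) =
      Hd m (fd^[i] S) (k : ℤ) n * Hd m (fd^[i + m] S) (k : ℤ) (n + 1) -
        Hd m (fd^[i] S) (k : ℤ) (n + 1) * Hd m (fd^[i + m] S) (k : ℤ) n := by
  obtain ⟨k, rfl⟩ := Nat.exists_eq_add_of_le' hk
  have hk₁ : ((k + 1 : ℕ) : ℤ) + 1 = ((k + 2 : ℕ) : ℤ) := by push_cast; ring
  have hk₂ : ((k + 1 : ℕ) : ℤ) - 1 = (k : ℤ) := by push_cast; ring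
  have hshift : fd^[i + m] S = fd^[1 * m] (fd^[i] S) := by
    rw [one_mul, add_comm, Function.iterate_add_apply]
  rw [hk₁, hk₂, hshift]
  simp only [Hd_natCast_s3]
  have h := desnanot_jacobi (hankelMatrix m (fd^[i] S) (k + 2) n)
  rwa [hankelMatrix_submatrix _ _ (fun a : Fin k => a.castSucc.succ) (fun a => a.castSucc.succ)
      1 1 (fun _ => rfl) (fun _ => rfl),
    hankelMatrix_submatrix _ _ Fin.castSucc Fin.castSucc 0 0 (fun _ => rfl) (fun _ => rfl),
    hankelMatrix_submatrix _ _ Fin.succ Fin.succ 1 1 (fun _ => rfl) (fun _ => rfl),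
    hankelMatrix_submatrix _ _ Fin.castSucc Fin.succ 0 1 (fun _ => rfl) (fun _ => rfl),
    hankelMatrix_submatrix _ _ Fin.succ Fin.castSucc 1 0 (fun _ => rfl) (fun _ => rfl),
    zero_mul, Function.iterate_zero, id, add_zero] at h

/-- For `i ≥ 0`, `k ≥ 1`, `n ≥ 0`: `H_{k+1}(Δ^i S_n) H_{k−1}(Δ^{i+m}S_{n+1})
= H_k(Δ^i S_n) H_k(Δ^{i+m}S_{n+1}) − H_k(Δ^i S_{n+1}) H_k(Δ^{i+m}S_n)`. -/
theorem stmt_3 (m : ℕ) (hm : 1 ≤ m) (S : ℕ → ℝ) (i k n : ℕ) (hk : 1 ≤ k) :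
    Hd m (fd^[i] S) ((k : ℤ) + 1) n * Hd m (fd^[i + m] S) ((k : ℤ) - 1) (n + 1) =
      Hd m (fd^[i] S) (k : ℤ) n * Hd m (fd^[i + m] S) (k : ℤ) (n + 1) -
        Hd m (fd^[i] S) (k : ℤ) (n + 1) * Hd m (fd^[i + m] S) (k : ℤ) n :=
  stmt_3_general m S i k n hk
end
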